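/- arXiv:cond-mat/0411699 — 2 statements merged into one kernel-verified Lean document; each statement's English description precedes it below -/
import Mathlib

section
/- For integers 0 ≤ k < n and any v ∈ (0,1), the equation ∑_{i=0}^k C(n,i) p^i (1-p)^{n-i} = v has exactly one solution p = p(v) in (0,1), and this solution satisfies 1 - v^{1/n} ≤ p(v) ≤ (1-v)^{1/n}. -/
/-!
The tail is `∑_{ν ≤ k} b_{n,ν}` in the Bernstein basis. Since
`b_{n,ν}' = n (b_{n-1,ν-1} - b_{n-1,ν})`, its derivative telescopes to `-n b_{n-1,k}`, which is
negative on `(0,1)` when `k < n`; so the tail decreases strictly from `1` at `p = 0` to `0` at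
`p = 1`, and every `v ∈ (0,1)` has exactly one preimage. Comparing with the expansion
`1 = ∑_{ν ≤ n} b_{n,ν}`, the tail contains the term `b_{n,0} = (1-p)^n` and misses the term
`b_{n,n} = p^n`; taking `n`-th roots of `(1-p)^n ≤ v ≤ 1 - p^n` gives the bounds.
-/

open Finset Polynomial

namespace bernsteinPolynomial

variable {R : Type*} [CommRing R]

theorem derivative_sum_range (n k : ℕ) :
    derivative (∑ ν ∈ range (k + 1), bernsteinPolynomial R n ν) =
      -n * bernsteinPolynomial R (n - 1) k := by
  induction k with
  | zero => simp [derivative_zero]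
  | succ k ih => rw [sum_range_succ, derivative_add, ih, derivative_succ]; ring

theorem eval_eq (n ν : ℕ) (p : R) :
    (bernsteinPolynomial R n ν).eval p = n.choose ν * p ^ ν * (1 - p) ^ (n - ν) := by
  simp [bernsteinPolynomial]

theorem eval_nonneg [PartialOrder R] [IsOrderedRing R] (n ν : ℕ) {p : R}
    (hp : p ∈ Set.Icc 0 1) : 0 ≤ (bernsteinPolynomial R n ν).eval p := by
  have := hp.1
  have : 0 ≤ 1 - p := sub_nonneg.2 hp.2
  rw [eval_eq]
  positivity

theorem eval_pos [PartialOrder R] [IsStrictOrderedRing R] {n ν : ℕ} (h : ν ≤ n) {p : R}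
    (hp : p ∈ Set.Ioo 0 1) : 0 < (bernsteinPolynomial R n ν).eval p := by
  have := hp.1
  have : 0 < 1 - p := sub_pos.2 hp.2
  have : (0 : R) < n.choose ν := by exact_mod_cast Nat.choose_pos h
  rw [eval_eq]
  positivity

end bernsteinPolynomial

noncomputable def binomialLowerTail (n k : ℕ) (p : ℝ) : ℝ :=
  ∑ i ∈ range (k + 1), (n.choose i : ℝ) * p ^ i * (1 - p) ^ (n - i)

section binomialLowerTail

variable {n k : ℕ}

theorem binomialLowerTail_eq_eval (n k : ℕ) (p : ℝ) :
    binomialLowerTail n k p = (∑ ν ∈ range (k + 1), bernsteinPolynomial ℝ n ν).eval p := by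
  simp [binomialLowerTail, eval_finsetSum, bernsteinPolynomial.eval_eq]

theorem binomialLowerTail_zero (n k : ℕ) : binomialLowerTail n k 0 = 1 := by
  simp [binomialLowerTail_eq_eval, eval_finsetSum, bernsteinPolynomial.eval_at_0]

theorem binomialLowerTail_one (hk : k < n) : binomialLowerTail n k 1 = 0 := by
  simp [binomialLowerTail_eq_eval, eval_finsetSum, bernsteinPolynomial.eval_at_1]
  omega

theorem continuous_binomialLowerTail (n k : ℕ) : Continuous (binomialLowerTail n k) := by
  simp only [funext (binomialLowerTail_eq_eval n k)]
  exact Polynomial.continuous _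

theorem strictAntiOn_binomialLowerTail (hk : k < n) :
    StrictAntiOn (binomialLowerTail n k) (Set.Icc 0 1) := by
  refine strictAntiOn_of_deriv_neg (convex_Icc 0 1)
    (continuous_binomialLowerTail n k).continuousOn fun p hp ↦ ?_
  rw [interior_Icc] at hp
  have hb := bernsteinPolynomial.eval_pos (R := ℝ) (Nat.le_sub_one_of_lt hk) hp
  have hn : (0 : ℝ) < n := by exact_mod_cast k.zero_le.trans_lt hk
  simp only [funext (binomialLowerTail_eq_eval n k), Polynomial.deriv,
    bernsteinPolynomial.derivative_sum_range, eval_mul, eval_neg, eval_natCast]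
  nlinarith

theorem existsUnique_binomialLowerTail_eq (hk : k < n) {v : ℝ} (hv : v ∈ Set.Ioo 0 1) :
    ∃! p, p ∈ Set.Ioo 0 1 ∧ binomialLowerTail n k p = v := by
  have hIVT := intermediate_value_Ioo' zero_le_one (continuous_binomialLowerTail n k).continuousOn
  rw [binomialLowerTail_zero, binomialLowerTail_one hk] at hIVT
  obtain ⟨p, hp, hpv⟩ := hIVT hv
  refine ⟨p, ⟨hp, hpv⟩, fun q ⟨hq, hqv⟩ ↦ ?_⟩
  exact (strictAntiOn_binomialLowerTail hk).injOn (Set.Ioo_subset_Icc_self hq)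
    (Set.Ioo_subset_Icc_self hp) (hqv.trans hpv.symm)

theorem one_sub_pow_le_binomialLowerTail (n k : ℕ) {p : ℝ} (hp : p ∈ Set.Icc 0 1) :
    (1 - p) ^ n ≤ binomialLowerTail n k p := by
  rw [binomialLowerTail_eq_eval, eval_finsetSum]
  have := single_le_sum (fun ν _ ↦ bernsteinPolynomial.eval_nonneg n ν hp)
    (mem_range.2 k.succ_pos)
  simpa [bernsteinPolynomial.eval_eq] using this

theorem binomialLowerTail_le_one_sub_pow (hk : k < n) {p : ℝ} (hp : p ∈ Set.Icc 0 1) :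
    binomialLowerTail n k p ≤ 1 - p ^ n := by
  have htotal : ∑ ν ∈ range n, (bernsteinPolynomial ℝ n ν).eval p + p ^ n = 1 := by
    simpa [sum_range_succ, eval_finsetSum, bernsteinPolynomial.eval_eq n n] using
      congrArg (eval p) (bernsteinPolynomial.sum ℝ n)
  have hpart : binomialLowerTail n k p ≤ ∑ ν ∈ range n, (bernsteinPolynomial ℝ n ν).eval p := by
    rw [binomialLowerTail_eq_eval, eval_finsetSum]
    exact sum_le_sum_of_subset_of_nonneg (range_subset_range.2 hk)
      fun ν _ _ ↦ bernsteinPolynomial.eval_nonneg n ν hp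
  linarith

end binomialLowerTail

theorem le_rpow_one_div_of_pow_le {x y : ℝ} {n : ℕ} (hn : n ≠ 0) (hx : 0 ≤ x) (hy : 0 ≤ y)
    (h : x ^ n ≤ y) : x ≤ y ^ ((1 : ℝ) / n) := by
  rwa [one_div, Real.le_rpow_inv_iff_of_pos hx hy (by positivity), Real.rpow_natCast]

theorem binomial_tail_unique_solution (n k : ℕ) (hk : k < n) (v : ℝ)
    (hv : v ∈ Set.Ioo (0:ℝ) 1) :
    (∃! p : ℝ, p ∈ Set.Ioo (0:ℝ) 1 ∧
        ∑ i ∈ Finset.range (k + 1), (n.choose i : ℝ) * p ^ i * (1 - p) ^ (n - i) = v)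
    ∧ ∀ p ∈ Set.Ioo (0:ℝ) 1,
        (∑ i ∈ Finset.range (k + 1), (n.choose i : ℝ) * p ^ i * (1 - p) ^ (n - i) = v) →
        1 - v ^ ((1:ℝ)/n) ≤ p ∧ p ≤ (1 - v) ^ ((1:ℝ)/n) := by
  refine ⟨existsUnique_binomialLowerTail_eq hk hv, fun p hp hpv ↦ ?_⟩
  have hpv : binomialLowerTail n k p = v := hpv
  have hn : n ≠ 0 := by omega
  have hp' := Set.Ioo_subset_Icc_self hp
  have hlow : (1 - p) ^ n ≤ v := hpv ▸ one_sub_pow_le_binomialLowerTail n k hp'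
  have hhigh : p ^ n ≤ 1 - v := by linarith [binomialLowerTail_le_one_sub_pow hk hp']
  constructor
  · linarith [le_rpow_one_div_of_pow_le hn (by linarith [hp.2]) hv.1.le hlow]
  · exact le_rpow_one_div_of_pow_le hn hp.1.le (by linarith [hv.2]) hhigh
end

section
/- Let Y be standard normal, ρ ∈ (0,1), p ∈ (0,1), and define Z = Φ((Φ^{-1}(p) + √ρ · Y)/√(1-ρ)). Then E[Z] = p. -/
open MeasureTheory Real

noncomputable def stdNormalPdf (y : ℝ) : ℝ := Real.exp (-y ^ 2 / 2) / Real.sqrt (2 * Real.pi)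

noncomputable def stdNormalCdf (x : ℝ) : ℝ := ∫ y in Set.Iic x, stdNormalPdf y

noncomputable def stdNormalInv : ℝ → ℝ := Function.invFun stdNormalCdf

/-!
Take `Y, X` independent standard normals and `a = Φ⁻¹(p)`. Given `Y`, the integrand
`Φ((a + √ρ Y)/√(1-ρ))` is the conditional probability that `√(1-ρ) X - √ρ Y ≤ a`; since
`(1 - ρ) + ρ = 1`, that variable is again standard normal, so the mean is `Φ(a) = p`.
-/

open ProbabilityTheory Set
open scoped NNReal

namespace ProbabilityTheory

variable (μ : Measure ℝ) [IsProbabilityMeasure μ]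

lemma continuous_cdf [NullSingletonClass μ] : Continuous (cdf μ) := by
  refine continuous_iff_continuousAt.2 fun x ↦
    (monotone_cdf μ).continuousAt_iff_leftLim_eq_rightLim.2 ?_
  have h := (cdf μ).measure_singleton x
  rw [measure_cdf, measure_singleton, eq_comm, ENNReal.ofReal_eq_zero, sub_nonpos] at h
  rw [le_antisymm ((monotone_cdf μ).leftLim_le le_rfl) h, StieltjesFunction.rightLim_eq]

lemma Ioo_subset_range_cdf [NullSingletonClass μ] : Ioo 0 1 ⊆ range (cdf μ) := by
  rintro p ⟨hp0, hp1⟩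
  obtain ⟨a, ha⟩ := ((tendsto_cdf_atBot μ).eventually_lt_const hp0).exists
  obtain ⟨b, hb⟩ := ((tendsto_cdf_atTop μ).eventually_const_lt hp1).exists
  exact intermediate_value_univ a b (continuous_cdf μ) ⟨ha.le, hb.le⟩

lemma cdf_map_const_mul {t : ℝ} (ht : 0 < t) (x : ℝ) :
    cdf (μ.map (t * ·)) x = cdf μ (x / t) := by
  have : IsProbabilityMeasure (μ.map (t * ·)) :=
    Measure.isProbabilityMeasure_map (measurable_const_mul t).aemeasurable
  have hpre : (t * ·) ⁻¹' Iic x = Iic (x / t) := by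
    ext y
    simp [le_div_iff₀ ht, mul_comm]
  rw [cdf_eq_real, cdf_eq_real, map_measureReal_apply (measurable_const_mul t) measurableSet_Iic,
    hpre]

lemma cdf_conv (ν : Measure ℝ) [IsProbabilityMeasure ν] (a : ℝ) :
    cdf (μ ∗ ν) a = ∫ y, cdf μ (a - y) ∂ν := by
  have hmeas : Measurable fun y ↦ cdf μ (a - y) :=
    (monotone_cdf μ).measurable.comp (measurable_const.sub measurable_id)
  have hlin : (μ ∗ ν) (Iic a) = ∫⁻ y, μ (Iic (a - y)) ∂ν := by
    have hadd : Measurable fun q : ℝ × ℝ ↦ q.1 + q.2 := measurable_add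
    rw [Measure.conv_comm, Measure.conv, Measure.map_apply hadd measurableSet_Iic,
      Measure.prod_apply (hadd measurableSet_Iic)]
    refine lintegral_congr fun y ↦ congrArg μ ?_
    ext x
    simp [le_sub_iff_add_le']
  rw [integral_eq_lintegral_of_nonneg_ae (ae_of_all _ fun y ↦ cdf_nonneg μ _)
    hmeas.aestronglyMeasurable]
  simp_rw [ofReal_cdf]
  rw [cdf_eq_real, measureReal_def, hlin]

lemma integral_cdf_gaussianReal_affine (v : ℝ≥0) {s t : ℝ} (ht : 0 < t) (hst : s ^ 2 + t ^ 2 = 1)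
    (a : ℝ) :
    ∫ y, cdf (gaussianReal 0 v) ((a + s * y) / t) ∂gaussianReal 0 v = cdf (gaussianReal 0 v) a := by
  have hconv : gaussianReal 0 v =
      (gaussianReal 0 v).map (t * ·) ∗ (gaussianReal 0 v).map (-s * ·) := by
    rw [gaussianReal_map_const_mul, gaussianReal_map_const_mul, gaussianReal_conv_gaussianReal]
    congr 1
    · simp
    · ext
      simp only [NNReal.coe_add, NNReal.coe_mul, NNReal.coe_mk]
      linear_combination (-(v : ℝ)) * hst
  set γ := gaussianReal 0 v
  calc ∫ y, cdf γ ((a + s * y) / t) ∂γ = ∫ y, cdf (γ.map (t * ·)) (a - -s * y) ∂γ := by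
        simp_rw [cdf_map_const_mul γ ht, neg_mul, sub_neg_eq_add]
    _ = ∫ z, cdf (γ.map (t * ·)) (a - z) ∂γ.map (-s * ·) :=
        (integral_map (measurable_const_mul _).aemeasurable ((monotone_cdf _).measurable.comp
          (measurable_const.sub measurable_id)).aestronglyMeasurable).symm
    _ = cdf γ a := by
      have : IsProbabilityMeasure (γ.map (t * ·)) :=
        Measure.isProbabilityMeasure_map (measurable_const_mul t).aemeasurable
      have : IsProbabilityMeasure (γ.map (-s * ·)) :=
        Measure.isProbabilityMeasure_map (measurable_const_mul _).aemeasurable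
      rw [← cdf_conv, ← hconv]

end ProbabilityTheory

lemma stdNormalPdf_eq_gaussianPDFReal : stdNormalPdf = gaussianPDFReal 0 1 := by
  ext y
  simp [stdNormalPdf, gaussianPDFReal, div_eq_inv_mul]

lemma integral_stdNormalPdf_mul (f : ℝ → ℝ) :
    ∫ y, stdNormalPdf y * f y = ∫ y, f y ∂gaussianReal 0 1 := by
  rw [integral_gaussianReal_eq_integral_smul one_ne_zero, stdNormalPdf_eq_gaussianPDFReal]
  rfl

lemma stdNormalCdf_eq_cdf_gaussianReal : stdNormalCdf = cdf (gaussianReal 0 1) := by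
  ext x
  rw [cdf_eq_real, measureReal_def, gaussianReal_apply_eq_integral _ one_ne_zero,
    ENNReal.toReal_ofReal
      (setIntegral_nonneg measurableSet_Iic fun y _ ↦ gaussianPDFReal_nonneg _ _ y),
    stdNormalCdf, stdNormalPdf_eq_gaussianPDFReal]

lemma stdNormalCdf_stdNormalInv {p : ℝ} (hp : p ∈ Ioo 0 1) : stdNormalCdf (stdNormalInv p) = p := by
  have := nullSingletonClass_gaussianReal (μ := 0) one_ne_zero
  exact Function.invFun_eq (stdNormalCdf_eq_cdf_gaussianReal ▸ Ioo_subset_range_cdf _ hp)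

theorem vasicek_mean (ρ p : ℝ) (hρ : ρ ∈ Set.Ioo (0:ℝ) 1) (hp : p ∈ Set.Ioo (0:ℝ) 1) :
    ∫ y : ℝ, stdNormalPdf y *
      stdNormalCdf ((stdNormalInv p + Real.sqrt ρ * y) / Real.sqrt (1 - ρ)) = p := by
  obtain ⟨hρ0, hρ1⟩ := hρ
  have ht : 0 < √(1 - ρ) := sqrt_pos.2 (by linarith)
  have hst : √ρ ^ 2 + √(1 - ρ) ^ 2 = 1 := by
    rw [sq_sqrt hρ0.le, sq_sqrt (by linarith)]
    ring
  rw [integral_stdNormalPdf_mul, stdNormalCdf_eq_cdf_gaussianReal,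
    integral_cdf_gaussianReal_affine 1 ht hst, ← stdNormalCdf_eq_cdf_gaussianReal]
  exact stdNormalCdf_stdNormalInv hp
end
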